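/- The DA-OA mechanism is non-wasteful: for every profile of individual preferences and reported category memberships, the assignment η produced by DA-OA satisfies: for every pair (i, s) with s P_i μ(i) and i acceptable at s, all position categories i is eligible for at s are exhausted, i.e. |{j : (j, o) ∈ η(s)}| = q_s^o and, if the reported type of i is r ∈ R, |{j : (j, r) ∈ η(s)}| = q_s^r. -/

import Mathlib

open Finset

/- `α` : individuals, `σ` : institutions, `ρ` : reserve categories.
Merit at institution `s` is given by an injective score `score s : α → ℕ`
(higher score = higher merit, `i ≻_s j` iff `score s j < score s i`).
Reported category membership is `τ : α → Option ρ` (`none` = general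
category).  Preferences of individual `i` over `Option σ` (`none` = being
unassigned) are given by an injective utility `ui i : Option σ → ℕ`. -/
variable {α σ ρ : Type*} [Fintype α] [DecidableEq α]
  [Fintype σ] [DecidableEq σ] [Fintype ρ] [DecidableEq ρ]

/-- The top-`k` elements of `A` under score `f`: members of `A` with fewer
than `k` strictly higher-scored elements of `A` (all of `A` if `|A| ≤ k`). -/
def topk (k : ℕ) (f : α → ℕ) (A : Finset α) : Finset α :=
  A.filter fun i => (A.filter fun j => f i < f j).card < k

/-- Open-category selection of institution `s`'s over-and-above choice rule. -/
def oaOpen (acc : σ → Finset α) (score : σ → α → ℕ) (qo : σ → ℕ)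
    (s : σ) (A : Finset α) : Finset α :=
  topk (qo s) (score s) (A ∩ acc s)

/-- Category-`r` selection of institution `s`'s over-and-above choice rule. -/
def oaRes (acc : σ → Finset α) (score : σ → α → ℕ) (qo : σ → ℕ)
    (q : σ → ρ → ℕ) (τ : α → Option ρ) (s : σ) (r : ρ) (A : Finset α) :
    Finset α :=
  topk (q s r) (score s)
    (((A ∩ acc s) \ oaOpen acc score qo s A).filter fun i => τ i = some r)

/-- The set chosen by institution `s`'s over-and-above choice rule. -/
def oaChosen (acc : σ → Finset α) (score : σ → α → ℕ) (qo : σ → ℕ)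
    (q : σ → ρ → ℕ) (τ : α → Option ρ) (s : σ) (A : Finset α) : Finset α :=
  oaOpen acc score qo s A ∪
    Finset.univ.biUnion fun r => oaRes acc score qo q τ s r A

/-- An assignment: each individual gets `none` (unassigned) or a pair
`(s, c)` of an institution and a category (`c = none` is the open category),
such that reserved positions only go to individuals of the corresponding
reported category, all assigned individuals are acceptable at their
institution, and category capacities are respected. -/
def IsAssignment (acc : σ → Finset α) (qo : σ → ℕ) (q : σ → ρ → ℕ)
    (τ : α → Option ρ) (η : α → Option (σ × Option ρ)) : Prop :=
  (∀ i s c, η i = some (s, c) → c = none ∨ c = τ i) ∧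
  (∀ i s c, η i = some (s, c) → i ∈ acc s) ∧
  (∀ s, (Finset.univ.filter fun i => η i = some (s, none)).card ≤ qo s) ∧
  (∀ s r, (Finset.univ.filter fun i => η i = some (s, some r)).card ≤ q s r)

/-- The matching induced by an assignment: the institution of `i`, if any. -/
def mu (η : α → Option (σ × Option ρ)) (i : α) : Option σ :=
  (η i).map Prod.fst

/-- The set of individuals matched to institution `s`. -/
def muS (η : α → Option (σ × Option ρ)) (s : σ) : Finset α :=
  Finset.univ.filter fun i => (η i).map Prod.fst = some s

/-- Individual rationality: everyone weakly prefers their assignment to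
being unassigned. -/
def IndRational (ui : α → Option σ → ℕ) (η : α → Option (σ × Option ρ)) :
    Prop :=
  ∀ i, ui i none ≤ ui i (mu η i)

/-- Within-category fairness of an assignment: whenever `i` strictly prefers
`s` to their assignment, every open-category position at `s` is held by a
higher-merit individual and, if `i` has reported reserve category `r`, every
category-`r` position at `s` is held by a higher-merit individual. -/
def WithinCatFair (score : σ → α → ℕ) (τ : α → Option ρ)
    (ui : α → Option σ → ℕ) (η : α → Option (σ × Option ρ)) : Prop :=
  ∀ i s, ui i (mu η i) < ui i (some s) →
    (∀ j, η j = some (s, none) → score s i < score s j) ∧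
    (∀ r, τ i = some r → ∀ j, η j = some (s, some r) → score s i < score s j)

/-- Non-wastefulness of an assignment: whenever `i` strictly prefers `s` to
their assignment and is acceptable at `s`, all positions `i` is eligible for
at `s` are exhausted. -/
def NonWasteful (acc : σ → Finset α) (qo : σ → ℕ) (q : σ → ρ → ℕ)
    (τ : α → Option ρ) (ui : α → Option σ → ℕ)
    (η : α → Option (σ × Option ρ)) : Prop :=
  ∀ i s, ui i (mu η i) < ui i (some s) → i ∈ acc s →
    (Finset.univ.filter fun j => η j = some (s, none)).card = qo s ∧
    (∀ r, τ i = some r →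
      (Finset.univ.filter fun j => η j = some (s, some r)).card = q s r)

/-- The over-and-above principle for an assignment: at each institution, every
holder of an open-category position has higher merit than every holder of a
reserve-category position. -/
def OverAndAbove (score : σ → α → ℕ) (η : α → Option (σ × Option ρ)) : Prop :=
  ∀ s i j (r : ρ), η i = some (s, none) → η j = some (s, some r) →
    score s j < score s i

/-- The best (reported-)acceptable institution of individual `i` that has not
yet rejected `i` (rejections recorded in `D`); `none` if there is none. -/
noncomputable def best (ui : α → Option σ → ℕ) (i : α) (D : Finset σ) : Option σ :=
  ((Finset.univ.filter fun s => s ∉ D ∧ ui i none < ui i (some s)).toList).argmax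
    fun s => ui i (some s)

/-- The applicants of institution `s` in the current step of deferred
acceptance, given the rejections `D` so far. -/
noncomputable def apps (ui : α → Option σ → ℕ) (D : α → Finset σ) (s : σ) : Finset α :=
  Finset.univ.filter fun i => best ui i (D i) = some s

/-- One step of the DA-OA algorithm: each individual proposes to their best
institution that has not rejected them yet, and each institution `s` rejects
the proposers not chosen by its over-and-above choice rule. -/
noncomputable def daStep (acc : σ → Finset α) (score : σ → α → ℕ) (qo : σ → ℕ)
    (q : σ → ρ → ℕ) (τ : α → Option ρ) (ui : α → Option σ → ℕ)
    (D : α → Finset σ) : α → Finset σ := fun i =>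
  D i ∪ Finset.univ.filter fun s =>
    best ui i (D i) = some s ∧ i ∉ oaChosen acc score qo q τ s (apps ui D s)

/-- The rejection state of the DA-OA algorithm after enough steps to
guarantee that a fixed point (no further rejections) has been reached. -/
noncomputable def daState (acc : σ → Finset α) (score : σ → α → ℕ) (qo : σ → ℕ)
    (q : σ → ρ → ℕ) (τ : α → Option ρ) (ui : α → Option σ → ℕ) :
    α → Finset σ :=
  (daStep acc score qo q τ ui)^[Fintype.card α * Fintype.card σ + 1]
    fun _ => ∅

/-- The outcome of the DA-OA mechanism: each individual finally held by an
institution is assigned the institution-category pair under which the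
over-and-above choice rule last selected them; everyone else gets `none`. -/
noncomputable def daAssign (acc : σ → Finset α) (score : σ → α → ℕ) (qo : σ → ℕ)
    (q : σ → ρ → ℕ) (τ : α → Option ρ) (ui : α → Option σ → ℕ) :
    α → Option (σ × Option ρ) := fun i =>
  match best ui i (daState acc score qo q τ ui i) with
  | none => none
  | some s =>
    if i ∈ oaOpen acc score qo s (apps ui (daState acc score qo q τ ui) s) then
      some (s, none)
    else
      match τ i with
      | none => none
      | some r =>
        if i ∈ oaRes acc score qo q τ s r
            (apps ui (daState acc score qo q τ ui) s) then
          some (s, some r)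
        else none

/-!
If `i` prefers `s` to their DA-OA outcome, then `s` rejected `i` at some step of the
algorithm, and the over-and-above rule rejects an acceptable applicant only when every
category the applicant is eligible for is full. These counts never decrease from one step to
the next: everyone held at `s` applies there again, and an applicant passed over for the open
category stays passed over. So the categories are still full when the algorithm stops.
-/

section Topk

omit [Fintype α] [DecidableEq α]

variable {k : ℕ} {f : α → ℕ} {A B : Finset α} {i j : α}

theorem topk_subset : topk k f A ⊆ A :=
  filter_subset _ _

theorem lt_of_mem_topk_of_notMem_topk (hi : i ∈ topk k f A) (hj : j ∈ A)
    (hj' : j ∉ topk k f A) : f j < f i := by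
  simp only [topk, mem_filter] at hi hj'
  by_contra! hij
  refine hj' ⟨hj, lt_of_le_of_lt (card_le_card fun y hy => ?_) hi.2⟩
  simp only [mem_filter] at hy ⊢
  exact ⟨hy.1, hij.trans_lt hy.2⟩

theorem card_topk_le [DecidableEq α] (hf : Function.Injective f) : #(topk k f A) ≤ k := by
  obtain h | ⟨m, hm, hmin⟩ := (topk k f A).eq_empty_or_nonempty.imp id
    fun h => exists_min_image (topk k f A) f h
  · simp [h]
  have hsub : (topk k f A).erase m ⊆ A.filter fun y => f m < f y := fun x hx =>
    mem_filter.mpr ⟨topk_subset (mem_of_mem_erase hx),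
      (hmin x (mem_of_mem_erase hx)).lt_of_ne fun h => ne_of_mem_erase hx (hf h).symm⟩
  have := card_le_card hsub
  rw [card_erase_of_mem hm] at this
  have := (mem_filter.mp hm).2
  omega

theorem card_topk_of_notMem [DecidableEq α] (hf : Function.Injective f) (hi : i ∈ A)
    (hi' : i ∉ topk k f A) : #(topk k f A) = k := by
  refine (card_topk_le hf).antisymm ?_
  obtain ⟨j, hj, hmax⟩ := exists_max_image (A \ topk k f A) f ⟨i, mem_sdiff.mpr ⟨hi, hi'⟩⟩
  obtain ⟨hjA, hj'⟩ := mem_sdiff.mp hj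
  have hk : k ≤ #(A.filter fun y => f j < f y) := by
    by_contra! h
    exact hj' (mem_filter.mpr ⟨hjA, h⟩)
  refine hk.trans (card_le_card fun y hy => ?_)
  obtain ⟨hyA, hy⟩ := mem_filter.mp hy
  by_contra hy'
  exact (hmax y (mem_sdiff.mpr ⟨hyA, hy'⟩)).not_gt hy

theorem card_topk_le_card_topk [DecidableEq α] (hf : Function.Injective f)
    (h : topk k f A ⊆ B) : #(topk k f A) ≤ #(topk k f B) := by
  by_cases hB : B ⊆ topk k f B
  · exact card_le_card (h.trans hB)
  · obtain ⟨x, hxB, hx⟩ := not_subset.mp hB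
    rw [card_topk_of_notMem hf hxB hx]
    exact card_topk_le hf

theorem notMem_topk_of_topk_subset [DecidableEq α] (hf : Function.Injective f) (hi : i ∈ A)
    (hi' : i ∉ topk k f A) (h : topk k f A ⊆ B) : i ∉ topk k f B := by
  intro hiB
  have hsub : topk k f A ⊆ B.filter fun y => f i < f y := fun y hy =>
    mem_filter.mpr ⟨h hy, lt_of_mem_topk_of_notMem_topk hy hi hi'⟩
  have := card_le_card hsub
  rw [card_topk_of_notMem hf hi hi'] at this
  exact this.not_gt (mem_filter.mp hiB).2

end Topk

theorem Function.isFixedPt_iterate_of_potential {β : Type*} {F : β → β} (m : β → ℕ)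
    {N : ℕ} (hN : ∀ x, m x ≤ N) (hF : ∀ x, F x ≠ x → m x < m (F x)) (x : β) :
    Function.IsFixedPt F (F^[N + 1] x) := by
  have key : ∀ n, Function.IsFixedPt F (F^[n] x) ∨ n ≤ m (F^[n] x) := by
    intro n
    induction n with
    | zero => exact Or.inr (Nat.zero_le _)
    | succ n ih =>
      rw [Function.iterate_succ_apply']
      by_cases h : Function.IsFixedPt F (F^[n] x)
      · rw [h.eq]
        exact Or.inl h
      · have hincr := hF _ h
        have hn := ih.resolve_left h
        exact Or.inr (by omega)
  exact (key (N + 1)).resolve_right fun h => by have := hN (F^[N + 1] x); omega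

section Best

omit [Fintype α] [DecidableEq α]

variable {ui : α → Option σ → ℕ} {i : α} {D : Finset σ} {s : σ}

theorem best_spec (h : best ui i D = some s) : s ∉ D ∧ ui i none < ui i (some s) := by
  simpa using List.argmax_mem h

theorem ui_none_le_ui_best : ui i none ≤ ui i (best ui i D) := by
  cases h : best ui i D with
  | none => exact le_rfl
  | some s => exact (best_spec h).2.le

theorem le_ui_best (hs : s ∉ D) (hacc : ui i none < ui i (some s)) :
    ui i (some s) ≤ ui i (best ui i D) := by
  have hmem : s ∈ (univ.filter fun t => t ∉ D ∧ ui i none < ui i (some t)).toList := by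
    simp [hs, hacc]
  cases h : best ui i D with
  | none => exact absurd (List.argmax_eq_none.mp h ▸ hmem) List.not_mem_nil
  | some t => exact List.le_of_mem_argmax (f := fun t => ui i (some t)) hmem h

end Best

section ChoiceRule

omit [Fintype α] [Fintype σ] [DecidableEq σ]

variable {acc : σ → Finset α} {score : σ → α → ℕ} {qo : σ → ℕ} {q : σ → ρ → ℕ}
  {τ : α → Option ρ} {s : σ} {A A' : Finset α} {i : α} {r : ρ}

variable (acc score qo q τ) in
def Exhausted (s : σ) (i : α) (A : Finset α) : Prop :=
  #(oaOpen acc score qo s A) = qo s ∧ ∀ r, τ i = some r → #(oaRes acc score qo q τ s r A) = q s r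

theorem mem_oaChosen_of_mem_oaOpen (h : i ∈ oaOpen acc score qo s A) :
    i ∈ oaChosen acc score qo q τ s A :=
  mem_union_left _ h

theorem mem_oaChosen_of_mem_oaRes (h : i ∈ oaRes acc score qo q τ s r A) :
    i ∈ oaChosen acc score qo q τ s A :=
  mem_union_right _ (mem_biUnion.mpr ⟨r, mem_univ r, h⟩)

theorem oaChosen_subset : oaChosen acc score qo q τ s A ⊆ A ∩ acc s :=
  union_subset topk_subset <| biUnion_subset.mpr fun _ _ _ hx =>
    (mem_sdiff.mp (mem_filter.mp (topk_subset hx)).1).1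

theorem exhausted_of_notMem_oaChosen (hs : Function.Injective (score s)) (hA : i ∈ A)
    (hacc : i ∈ acc s) (hi : i ∉ oaChosen acc score qo q τ s A) :
    Exhausted acc score qo q τ s i A := by
  have hA' : i ∈ A ∩ acc s := mem_inter.mpr ⟨hA, hacc⟩
  have hopen : i ∉ oaOpen acc score qo s A := fun h => hi (mem_oaChosen_of_mem_oaOpen h)
  refine ⟨card_topk_of_notMem hs hA' hopen, fun r hr => ?_⟩
  exact card_topk_of_notMem hs (mem_filter.mpr ⟨mem_sdiff.mpr ⟨hA', hopen⟩, hr⟩)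
    fun h => hi (mem_oaChosen_of_mem_oaRes h)

theorem oaOpen_subset_of_oaChosen_subset (h : oaChosen acc score qo q τ s A ⊆ A') :
    oaOpen acc score qo s A ⊆ A' ∩ acc s := fun _ hx =>
  mem_inter.mpr ⟨h (mem_oaChosen_of_mem_oaOpen hx), (mem_inter.mp (topk_subset hx)).2⟩

/-- Someone chosen for a reserve position from `A` was outranked by a full open category,
and that open category is still among the applicants `A'`. -/
theorem oaRes_subset_of_oaChosen_subset (hs : Function.Injective (score s))
    (h : oaChosen acc score qo q τ s A ⊆ A') :
    oaRes acc score qo q τ s r A ⊆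
      ((A' ∩ acc s) \ oaOpen acc score qo s A').filter fun i => τ i = some r := by
  intro x hx
  obtain ⟨hxA, hxr⟩ := mem_filter.mp (topk_subset hx)
  obtain ⟨hxAacc, hxo⟩ := mem_sdiff.mp hxA
  have hxA' := h (mem_oaChosen_of_mem_oaRes hx)
  refine mem_filter.mpr ⟨mem_sdiff.mpr ⟨mem_inter.mpr ⟨hxA', (mem_inter.mp hxAacc).2⟩, ?_⟩, hxr⟩
  exact notMem_topk_of_topk_subset hs hxAacc hxo (oaOpen_subset_of_oaChosen_subset h)

theorem Exhausted.of_oaChosen_subset (hs : Function.Injective (score s))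
    (hex : Exhausted acc score qo q τ s i A) (h : oaChosen acc score qo q τ s A ⊆ A') :
    Exhausted acc score qo q τ s i A' := by
  refine ⟨(card_topk_le hs).antisymm ?_, fun r hr => (card_topk_le hs).antisymm ?_⟩
  · exact hex.1.ge.trans (card_topk_le_card_topk hs (oaOpen_subset_of_oaChosen_subset h))
  · exact (hex.2 r hr).ge.trans
      (card_topk_le_card_topk hs (oaRes_subset_of_oaChosen_subset hs h))

end ChoiceRule

section DeferredAcceptance

variable {acc : σ → Finset α} {score : σ → α → ℕ} {qo : σ → ℕ} {q : σ → ρ → ℕ}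
  {τ : α → Option ρ} {ui : α → Option σ → ℕ} {D : α → Finset σ} {i : α} {s : σ} {r : ρ}

omit [DecidableEq α] [Fintype ρ] [DecidableEq ρ] in
theorem mem_apps : i ∈ apps ui D s ↔ best ui i (D i) = some s := by
  simp [apps]

theorem best_eq_some_of_mem_oaChosen (h : i ∈ oaChosen acc score qo q τ s (apps ui D s)) :
    best ui i (D i) = some s :=
  mem_apps.mp (mem_inter.mp (oaChosen_subset h)).1

theorem mem_daStep : s ∈ daStep acc score qo q τ ui D i ↔
    s ∈ D i ∨ best ui i (D i) = some s ∧ i ∉ oaChosen acc score qo q τ s (apps ui D s) := by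
  simp [daStep]

theorem oaChosen_apps_subset_apps_daStep :
    oaChosen acc score qo q τ s (apps ui D s) ⊆ apps ui (daStep acc score qo q τ ui D) s := by
  intro i hi
  have hb := best_eq_some_of_mem_oaChosen hi
  have hD : daStep acc score qo q τ ui D i = D i := by
    ext t
    rw [mem_daStep, or_iff_left_iff_imp]
    rintro ⟨hbt, hit⟩
    exact absurd (Option.some.inj (hb.symm.trans hbt) ▸ hi) hit
  rwa [mem_apps, hD]

theorem daState_isFixedPt :
    Function.IsFixedPt (daStep acc score qo q τ ui) (daState acc score qo q τ ui) := by
  refine Function.isFixedPt_iterate_of_potential (fun D => ∑ i, #(D i)) (fun D => ?_)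
    (fun D hD => ?_) _
  · calc ∑ i, #(D i) ≤ ∑ _i : α, Fintype.card σ := sum_le_sum fun i _ => card_le_univ _
      _ = Fintype.card α * Fintype.card σ := by simp
  · obtain ⟨i, hi⟩ := Function.ne_iff.mp hD
    have hle : ∀ j, D j ⊆ daStep acc score qo q τ ui D j := fun _ => subset_union_left
    exact sum_lt_sum (fun j _ => card_le_card (hle j))
      ⟨i, mem_univ i, card_lt_card ((hle i).ssubset_of_ne (Ne.symm hi))⟩

theorem mem_oaChosen_of_best_daState (hb : best ui i (daState acc score qo q τ ui i) = some s) :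
    i ∈ oaChosen acc score qo q τ s (apps ui (daState acc score qo q τ ui) s) := by
  by_contra hc
  have hs := mem_daStep.mpr (Or.inr ⟨hb, hc⟩)
  rw [daState_isFixedPt.eq] at hs
  exact (best_spec hb).1 hs

theorem exhausted_apps_iterate_daStep (hs : Function.Injective (score s)) (hacc : i ∈ acc s)
    (h0 : s ∉ D i) {n : ℕ} (hn : s ∈ (daStep acc score qo q τ ui)^[n] D i) :
    Exhausted acc score qo q τ s i (apps ui ((daStep acc score qo q τ ui)^[n] D) s) := by
  induction n with
  | zero => exact absurd hn h0
  | succ n ih =>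
    rw [Function.iterate_succ_apply'] at hn ⊢
    refine Exhausted.of_oaChosen_subset hs ?_ oaChosen_apps_subset_apps_daStep
    rcases mem_daStep.mp hn with h | ⟨hb, hi⟩
    · exact ih h
    · exact exhausted_of_notMem_oaChosen hs (mem_apps.mpr hb) hacc hi

theorem daAssign_eq_some_none_iff : daAssign acc score qo q τ ui i = some (s, none) ↔
    i ∈ oaOpen acc score qo s (apps ui (daState acc score qo q τ ui) s) := by
  constructor
  · intro h
    unfold daAssign at h
    split at h
    · simp at h
    split_ifs at h with ho
    · cases h
      exact ho
    split at h
    · simp at h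
    split_ifs at h
    simp at h
  · intro h
    have hb := best_eq_some_of_mem_oaChosen (mem_oaChosen_of_mem_oaOpen (q := q) (τ := τ) h)
    simp [daAssign, hb, h]

theorem daAssign_eq_some_some_iff : daAssign acc score qo q τ ui i = some (s, some r) ↔
    i ∈ oaRes acc score qo q τ s r (apps ui (daState acc score qo q τ ui) s) := by
  constructor
  · intro h
    unfold daAssign at h
    split at h
    · simp at h
    split_ifs at h
    · simp at h
    split at h
    · simp at h
    split_ifs at h with hr
    cases h
    exact hr
  · intro h
    have hb := best_eq_some_of_mem_oaChosen (mem_oaChosen_of_mem_oaRes h)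
    obtain ⟨hA, hτ⟩ := mem_filter.mp (topk_subset h)
    simp [daAssign, hb, (mem_sdiff.mp hA).2, hτ, h]

theorem mu_daAssign :
    mu (daAssign acc score qo q τ ui) i = best ui i (daState acc score qo q τ ui i) := by
  cases hb : best ui i (daState acc score qo q τ ui i) with
  | none => simp [mu, daAssign, hb]
  | some s =>
    rcases mem_union.mp (mem_oaChosen_of_best_daState hb) with h | h
    · simp [mu, daAssign_eq_some_none_iff.mpr h]
    · obtain ⟨r, -, hr⟩ := mem_biUnion.mp h
      simp [mu, daAssign_eq_some_some_iff.mpr hr]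

end DeferredAcceptance

theorem daOA_non_wasteful_general
    (acc : σ → Finset α) (score : σ → α → ℕ)
    (hscore : ∀ s, Function.Injective (score s))
    (qo : σ → ℕ) (q : σ → ρ → ℕ) (τ : α → Option ρ)
    (ui : α → Option σ → ℕ) :
    NonWasteful acc qo q τ ui (daAssign acc score qo q τ ui) := by
  intro i s hpref hacc
  rw [mu_daAssign] at hpref
  have hs_acceptable : ui i none < ui i (some s) := ui_none_le_ui_best.trans_lt hpref
  have hrejected : s ∈ daState acc score qo q τ ui i := by
    by_contra hs
    exact (le_ui_best hs hs_acceptable).not_gt hpref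
  have hexhausted := exhausted_apps_iterate_daStep (hscore s) hacc (notMem_empty s) hrejected
  simp only [daAssign_eq_some_none_iff, daAssign_eq_some_some_iff, filter_univ_mem]
  exact hexhausted

/-- The DA-OA mechanism is non-wasteful: for every profile
of (strict) preferences and reported category memberships, whenever an
individual `i` strictly prefers an institution `s` to their DA-OA assignment
and is acceptable at `s`, all position categories `i` is eligible for at `s`
are exhausted: all `qo s` open-category positions are filled and, if `i`'s
reported category is `r`, all `q s r` category-`r` positions are filled. -/
theorem daOA_non_wasteful
    (acc : σ → Finset α) (score : σ → α → ℕ)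
    (hscore : ∀ s, Function.Injective (score s))
    (qo : σ → ℕ) (q : σ → ρ → ℕ) (τ : α → Option ρ)
    (ui : α → Option σ → ℕ) (hui : ∀ i, Function.Injective (ui i)) :
    NonWasteful acc qo q τ ui (daAssign acc score qo q τ ui) :=
  daOA_non_wasteful_general acc score hscore qo q τ ui
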